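/- Let τ > 1 and θ > 0 be real numbers and let T be a positive integer. Suppose real sequences H, V, S, I (indexed by t = 1,…,T, with V[0] given) satisfy the discretized LIF recursion with V_reset = 0 and V_th = 1: H[t] = V[t−1] + (1/τ)(−V[t−1] + I[t]); S[t] = Fire(H[t] − 1); and V[t] = 0 if H[t] ≥ 1, V[t] = H[t] if 0 ≤ H[t] < 1, V[t] = 0 if H[t] < 0. Define the rescaled sequences Ĥ[t] := θτ·H[t], V̂[t] := θ(τ−1)·V[t], Î[t] := θ·I[t], and the rescaled threshold V̂_th^τ := θτ. Then for every t: (a) Ĥ[t] = V̂[t−1] + Î[t]; (b) 2·S[t] = Sign(Ĥ[t] − V̂_th^τ) + 1; and (c) V̂[t] = 0 if Ĥ[t] ≥ V̂_th^τ, V̂[t] = ((τ−1)/τ)·Ĥ[t] if 0 ≤ Ĥ[t] < V̂_th^τ, and V̂[t] = 0 if Ĥ[t] < 0. -/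

import Mathlib

/-- Heaviside step function: `Fire x = 1` if `x ≥ 0`, else `0`. -/
noncomputable def Fire (x : ℝ) : ℝ := if 0 ≤ x then 1 else 0

/-- Sign function: `Sign x = 1` if `x ≥ 0`, else `-1`. -/
noncomputable def Sign (x : ℝ) : ℝ := if 0 ≤ x then 1 else -1

/-!
All three identities come from multiplying the LIF recursion by the positive constant `θτ`:
the charge equation becomes affine without division, the threshold `1` moves to `θτ`, and
positivity of `θτ` preserves every comparison deciding firing and reset. Writing
`θ(τ-1) = ((τ-1)/τ)·θτ` then expresses the rescaled post-reset potential through `Ĥ`.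
-/

lemma two_mul_Fire (x : ℝ) : 2 * Fire x = Sign x + 1 := by
  unfold Fire Sign
  split_ifs <;> norm_num

lemma Sign_mul_of_pos {c : ℝ} (hc : 0 < c) (x : ℝ) : Sign (c * x) = Sign x := by
  simp only [Sign, mul_nonneg_iff_of_pos_left hc]

lemma mul_lif_charge {τ : ℝ} (hτ : τ ≠ 0) (θ v i : ℝ) :
    θ * τ * (v + 1 / τ * (-v + i)) = θ * (τ - 1) * v + θ * i := by
  field_simp
  ring

lemma mul_lif_reset {c : ℝ} (hc : 0 < c) (k a x : ℝ) :
    k * (c * (if a ≤ x then 0 else if 0 ≤ x then x else 0)) =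
      if c * a ≤ c * x then 0 else if 0 ≤ c * x then k * (c * x) else 0 := by
  simp only [mul_le_mul_iff_right₀ hc, mul_nonneg_iff_of_pos_left hc]
  split_ifs <;> ring

theorem stmt0_general (τ θ : ℝ) (hτ : 1 < τ) (hθ : 0 < θ) (T : ℕ)
    (H V S I : ℕ → ℝ)
    (hH : ∀ t, 1 ≤ t → t ≤ T → H t = V (t - 1) + (1 / τ) * (-(V (t - 1)) + I t))
    (hS : ∀ t, 1 ≤ t → t ≤ T → S t = Fire (H t - 1))
    (hV : ∀ t, 1 ≤ t → t ≤ T →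
      V t = if 1 ≤ H t then 0 else if 0 ≤ H t then H t else 0) :
    ∀ t, 1 ≤ t → t ≤ T →
      (θ * τ * H t = θ * (τ - 1) * V (t - 1) + θ * I t) ∧
      (2 * S t = Sign (θ * τ * H t - θ * τ) + 1) ∧
      (θ * (τ - 1) * V t =
        if θ * τ ≤ θ * τ * H t then 0
        else if 0 ≤ θ * τ * H t then ((τ - 1) / τ) * (θ * τ * H t)
        else 0) := by
  intro t ht₁ htT
  have hτ₀ : 0 < τ := by linarith
  have hθτ : 0 < θ * τ := mul_pos hθ hτ₀
  refine ⟨?_, ?_, ?_⟩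
  · rw [hH t ht₁ htT, mul_lif_charge hτ₀.ne']
  · rw [hS t ht₁ htT, two_mul_Fire, ← mul_sub_one, Sign_mul_of_pos hθτ]
  · have hscale : θ * (τ - 1) = (τ - 1) / τ * (θ * τ) := by field_simp
    rw [hV t ht₁ htT, hscale, mul_assoc, mul_lif_reset hθτ, mul_one]

/-- Theorem 1 of the paper (exact real rescaling of the discretized LIF recursion with
`V_reset = 0`, `V_th = 1`): with `Ĥ[t] = θτ·H[t]`, `V̂[t] = θ(τ-1)·V[t]`, `Î[t] = θ·I[t]`
and threshold `V̂_th^τ = θτ`, the recursion takes the rescaled form (a), (b), (c). -/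
theorem stmt0 (τ θ : ℝ) (hτ : 1 < τ) (hθ : 0 < θ) (T : ℕ) (hT : 0 < T)
    (H V S I : ℕ → ℝ)
    (hH : ∀ t, 1 ≤ t → t ≤ T → H t = V (t - 1) + (1 / τ) * (-(V (t - 1)) + I t))
    (hS : ∀ t, 1 ≤ t → t ≤ T → S t = Fire (H t - 1))
    (hV : ∀ t, 1 ≤ t → t ≤ T →
      V t = if 1 ≤ H t then 0 else if 0 ≤ H t then H t else 0) :
    ∀ t, 1 ≤ t → t ≤ T →
      (θ * τ * H t = θ * (τ - 1) * V (t - 1) + θ * I t) ∧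
      (2 * S t = Sign (θ * τ * H t - θ * τ) + 1) ∧
      (θ * (τ - 1) * V t =
        if θ * τ ≤ θ * τ * H t then 0
        else if 0 ≤ θ * τ * H t then ((τ - 1) / τ) * (θ * τ * H t)
        else 0) :=
  stmt0_general τ θ hτ hθ T H V S I hH hS hV
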